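/- For any smooth curve u(f) in ℝ⁴ with q(f) = π(u(f)), one has (q′(f), 0) = 2A(u(f))u′(f) − 2(0,0,0, l(u(f),u′(f))), where l(u,u′) = u4u1′ − u3u2′ + u2u3′ − u1u4′. -/

import Mathlib

open Matrix

noncomputable def ksA (u : Fin 4 → ℝ) : Matrix (Fin 4) (Fin 4) ℝ :=
  !![u 0, -u 1, -u 2, u 3;
     u 1, u 0, -u 3, -u 2;
     u 2, u 3, u 0, u 1;
     u 3, -u 2, u 1, -u 0]

/-- KS bilinear form. -/
noncomputable def ksL (u v : Fin 4 → ℝ) : ℝ :=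
  u 3 * v 0 - u 2 * v 1 + u 1 * v 2 - u 0 * v 3

/-- Extended KS projection `(π(u),0) = A(u)u`, as a vector in ℝ⁴. -/
noncomputable def ksPiExt (u : Fin 4 → ℝ) : Fin 4 → ℝ := (ksA u).mulVec u

/-- For a smooth curve `u(f)` with derivative `u'(f)`, the derivative of
`(q(f),0) = (π(u(f)),0)` equals `2A(u)u' − 2(0,0,0,l(u,u'))`. -/
theorem deriv_ksPiExt (u u' : ℝ → Fin 4 → ℝ)
    (hu : ∀ f i, HasDerivAt (fun f => u f i) (u' f i) f) :
    ∀ f j, HasDerivAt (fun f => ksPiExt (u f) j)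
      (2 * ((ksA (u f)).mulVec (u' f)) j -
        2 * (if j = 3 then ksL (u f) (u' f) else 0)) f := by
  intro f j
  have h := hu f
  have m : ∀ i k : Fin 4, HasDerivAt (fun f => u f i * u f k)
      (u' f i * u f k + u f i * u' f k) f := fun i k => (h i).mul (h k)
  fin_cases j <;>
    simp [ksPiExt, ksA, ksL, mulVec, dotProduct, Fin.sum_univ_four]
  · exact ((((m 0 0).add (m 1 1).neg).add (m 2 2).neg).add (m 3 3)).congr_deriv (by ring)
  · exact ((((m 1 0).add (m 0 1)).add (m 3 2).neg).add (m 2 3).neg).congr_deriv (by ring)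
  · exact ((((m 2 0).add (m 3 1)).add (m 0 2)).add (m 1 3)).congr_deriv (by ring)
  · exact ((((m 3 0).add (m 2 1).neg).add (m 1 2)).add (m 0 3).neg).congr_deriv (by ring)
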